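/- The matrices s_f for f : Fin g → Fin k span the vector space CS_{k,g} of k×g real matrices with equal column sums. In particular, any linear map on CS_{k,g} is determined by its values on the s_f. -/

import Mathlib

/-- The 0/1 matrix whose j-th column has a 1 in row `f j` and zeros elsewhere. -/
def sMat {k g : ℕ} (f : Fin g → Fin k) : Matrix (Fin k) (Fin g) ℝ :=
  fun i j => if i = f j then 1 else 0

/-- The submodule of matrices with equal column sums. -/
def CSsub (k g : ℕ) : Submodule ℝ (Matrix (Fin k) (Fin g) ℝ) where
  carrier := { M : Matrix (Fin k) (Fin g) ℝ | ∀ j j', ∑ i, M i j = ∑ i, M i j' }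
  add_mem' := by
    intro a b ha hb j j'
    simp only [Matrix.add_apply, Finset.sum_add_distrib]
    rw [ha j j', hb j j']
  zero_mem' := by intro j j'; simp
  smul_mem' := by
    intro c a ha j j'
    simp only [Matrix.smul_apply, smul_eq_mul, ← Finset.mul_sum]
    rw [ha j j']

/-- The matrices `sMat f` span the space of k×g matrices with equal column sums. -/
theorem span_sMat_eq_CS (k g : ℕ) (hk : 0 < k) :
    (Submodule.span ℝ (Set.range (fun f : Fin g → Fin k => sMat f)) :
      Set (Matrix (Fin k) (Fin g) ℝ)) =
    { M : Matrix (Fin k) (Fin g) ℝ | ∀ j j', ∑ i, M i j = ∑ i, M i j' } := by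
  apply Set.Subset.antisymm
  · have h : Submodule.span ℝ (Set.range (fun f : Fin g → Fin k => sMat f)) ≤ CSsub k g := by
      rw [Submodule.span_le]
      rintro M ⟨f, rfl⟩ j j'
      simp [sMat, Finset.sum_ite_eq']
    exact h
  · intro M hM
    set z : Fin k := ⟨0, hk⟩ with hz
    set f₀ : Fin g → Fin k := fun _ => z with hf₀
    rcases Nat.eq_zero_or_pos g with hg | hg
    · have : M = sMat f₀ := by
        funext i j
        exact absurd j.2 (by omega)
      rw [this]
      exact Submodule.subset_span ⟨f₀, rfl⟩
    · set j₀ : Fin g := ⟨0, hg⟩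
      have key : M = (∑ j, ∑ i, M i j • (sMat (Function.update f₀ j i) - sMat f₀))
          + (∑ i, M i j₀) • sMat f₀ := by
        funext a b
        have hupd : ∀ (j : Fin g) (i : Fin k) (b : Fin g),
            Function.update f₀ j i b = if b = j then i else z := by
          intro j i b
          by_cases h : b = j <;> simp [Function.update, h, hf₀]
        simp only [Matrix.add_apply, Matrix.sum_apply, Matrix.smul_apply, Matrix.sub_apply,
          smul_eq_mul, sMat, hupd]
        rw [Finset.sum_eq_single b]
        · have : ∀ i ∈ Finset.univ, M i b * ((if a = if b = b then i else z then (1:ℝ) else 0)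
              - if a = z then 1 else 0)
              = M i b * (if a = i then 1 else 0) - M i b * (if a = z then 1 else 0) := by
            intro i _
            simp [mul_sub]
          rw [Finset.sum_congr rfl this, Finset.sum_sub_distrib]
          by_cases ha : a = z
          · simp [ha, Finset.sum_ite_eq, hM b j₀, hf₀]
          · simp [ha, Finset.sum_ite_eq, hf₀]
        · intro j _ hj
          apply Finset.sum_eq_zero
          intro i _
          simp [Ne.symm hj, hf₀]
        · simp
      rw [key]
      refine Submodule.add_mem _ ?_ ?_
      · refine Submodule.sum_mem _ fun j _ => Submodule.sum_mem _ fun i _ => ?_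
        exact Submodule.smul_mem _ _ (Submodule.sub_mem _
          (Submodule.subset_span ⟨_, rfl⟩) (Submodule.subset_span ⟨f₀, rfl⟩))
      · exact Submodule.smul_mem _ _ (Submodule.subset_span ⟨f₀, rfl⟩)
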